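/- Let u ∈ ℝ^M and v ∈ ℝ^N be unit vectors and σ > 0, and set C = σuvᵀ. Then there exist δ > 0 and Λ ≥ 0 such that for every E ∈ ℝ^{M×N} with ‖E‖_F ≤ δ: | (‖C + E‖_F² − ‖C + E‖_op²) − ‖(I_M − uuᵀ)E(I_N − vvᵀ)‖_F² | ≤ Λ · ‖E‖_F³. (In other words, the squared Frobenius distance of C + E from its best rank-one approximation equals ‖(I_M − uuᵀ)E(I_N − vvᵀ)‖_F² up to a third-order error in the perturbation.) -/

import Mathlib

open scoped BigOperators
open Matrix

noncomputable section

/-- Squared Frobenius norm of a real matrix: `‖A‖_F² = ∑ᵢⱼ A i j ^ 2`. -/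
def frobSq {M N : ℕ} (A : Matrix (Fin M) (Fin N) ℝ) : ℝ := ∑ i, ∑ j, A i j ^ 2

/-- Squared Euclidean norm of a vector. -/
def vnormSq {n : ℕ} (x : Fin n → ℝ) : ℝ := ∑ i, x i ^ 2

/-- The spectral (ℓ²-operator) norm of a real matrix:
`‖A‖_op = sup { ‖Ax‖ : ‖x‖ = 1 }`, which equals the largest singular value. -/
def opNorm {M N : ℕ} (A : Matrix (Fin M) (Fin N) ℝ) : ℝ :=
  sSup {r : ℝ | ∃ x : Fin N → ℝ, vnormSq x = 1 ∧ r = Real.sqrt (vnormSq (A.mulVec x))}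

/-!
With `e = uᵀEv`, `h = Ev` and `g' = (I - vvᵀ)Eᵀu`, expanding both Frobenius norms shows
`‖C + E‖_F² - ‖(I - uuᵀ)E(I - vvᵀ)‖_F² = σ² + 2σe + ‖h‖² + ‖g'‖²` exactly, so it suffices to
show that `‖C + E‖_op²` agrees with this second-order expansion up to `O(‖E‖_F³ / σ)`.

For the upper bound split a unit vector as `x = αv + y` with `y ⊥ v`: Cauchy–Schwarz bounds
`‖(C + E)x‖²` by a concave quadratic in `t = ‖y‖`, whose maximum exceeds the expansion by
`O(‖E‖_F³ / σ)` once `‖E‖_F ≤ σ / 4`. For the lower bound test with `z = v + σ⁻¹g'`, the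
first-order perturbation of the top right singular vector.
-/

section Norms

variable {M N : ℕ} {u : Fin M → ℝ} {v : Fin N → ℝ}

lemma vnormSq_eq_dotProduct (x : Fin N → ℝ) : vnormSq x = x ⬝ᵥ x := by
  simp only [vnormSq, dotProduct, sq]

lemma vnormSq_nonneg (x : Fin N → ℝ) : 0 ≤ vnormSq x := by
  unfold vnormSq; positivity

lemma frobSq_nonneg (A : Matrix (Fin M) (Fin N) ℝ) : 0 ≤ frobSq A := by
  unfold frobSq; positivity

lemma frobSq_eq_sum_vnormSq (A : Matrix (Fin M) (Fin N) ℝ) : frobSq A = ∑ i, vnormSq (A i) :=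
  rfl

lemma frobSq_transpose (A : Matrix (Fin M) (Fin N) ℝ) : frobSq Aᵀ = frobSq A :=
  Finset.sum_comm

lemma vnormSq_add (x y : Fin N → ℝ) :
    vnormSq (x + y) = vnormSq x + 2 * (x ⬝ᵥ y) + vnormSq y := by
  simp only [vnormSq_eq_dotProduct, add_dotProduct, dotProduct_add, dotProduct_comm y x]
  ring

lemma vnormSq_smul (c : ℝ) (x : Fin N → ℝ) : vnormSq (c • x) = c ^ 2 * vnormSq x := by
  simp only [vnormSq_eq_dotProduct, smul_dotProduct, dotProduct_smul, smul_eq_mul]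
  ring

lemma sq_dotProduct_le (x y : Fin N → ℝ) : (x ⬝ᵥ y) ^ 2 ≤ vnormSq x * vnormSq y :=
  Finset.sum_mul_sq_le_sq_mul_sq _ x y

lemma abs_dotProduct_le (x y : Fin N → ℝ) :
    |x ⬝ᵥ y| ≤ √(vnormSq x) * √(vnormSq y) := by
  rw [← Real.sqrt_mul (vnormSq_nonneg x)]
  exact Real.abs_le_sqrt (sq_dotProduct_le x y)

lemma vnormSq_mulVec_le (A : Matrix (Fin M) (Fin N) ℝ) (x : Fin N → ℝ) :
    vnormSq (A *ᵥ x) ≤ frobSq A * vnormSq x := by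
  rw [frobSq_eq_sum_vnormSq, Finset.sum_mul]
  exact Finset.sum_le_sum fun i _ => sq_dotProduct_le (A i) x

lemma sqrt_vnormSq_mulVec_le (A : Matrix (Fin M) (Fin N) ℝ) (x : Fin N → ℝ) :
    √(vnormSq (A *ᵥ x)) ≤ √(frobSq A) * √(vnormSq x) := by
  rw [← Real.sqrt_mul (frobSq_nonneg A)]
  exact Real.sqrt_le_sqrt (vnormSq_mulVec_le A x)

lemma sq_opNorm_le {U : ℝ} (A : Matrix (Fin M) (Fin N) ℝ) (hU : 0 ≤ U)
    (h : ∀ x, vnormSq x = 1 → vnormSq (A *ᵥ x) ≤ U) : opNorm A ^ 2 ≤ U := by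
  have hnonneg : 0 ≤ opNorm A := Real.sSup_nonneg (by rintro r ⟨x, -, rfl⟩; positivity)
  have hle : opNorm A ≤ √U :=
    Real.sSup_le (by rintro r ⟨x, hx, rfl⟩; exact Real.sqrt_le_sqrt (h x hx)) (Real.sqrt_nonneg U)
  calc opNorm A ^ 2 ≤ √U ^ 2 := pow_le_pow_left₀ hnonneg hle 2
    _ = U := Real.sq_sqrt hU

lemma vnormSq_mulVec_le_sq_opNorm_mul (A : Matrix (Fin M) (Fin N) ℝ) (x : Fin N → ℝ) :
    vnormSq (A *ᵥ x) ≤ opNorm A ^ 2 * vnormSq x := by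
  rcases (vnormSq_nonneg x).eq_or_lt with hx | hx
  · simpa [← hx] using vnormSq_mulVec_le A x
  set c := (√(vnormSq x))⁻¹
  have hc : c ^ 2 * vnormSq x = 1 := by
    rw [inv_pow, Real.sq_sqrt hx.le, inv_mul_cancel₀ hx.ne']
  have hbdd : BddAbove {r | ∃ x, vnormSq x = 1 ∧ r = √(vnormSq (A *ᵥ x))} :=
    ⟨√(frobSq A), by
      rintro r ⟨y, hy, rfl⟩
      simpa [hy] using sqrt_vnormSq_mulVec_le A y⟩
  have hle : √(vnormSq (A *ᵥ (c • x))) ≤ opNorm A :=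
    le_csSup hbdd ⟨c • x, by rw [vnormSq_smul, hc], rfl⟩
  have hle2 : c ^ 2 * vnormSq (A *ᵥ x) ≤ opNorm A ^ 2 := by
    rw [← vnormSq_smul, ← mulVec_smul, ← Real.sq_sqrt (vnormSq_nonneg _)]
    exact pow_le_pow_left₀ (Real.sqrt_nonneg _) hle 2
  calc vnormSq (A *ᵥ x) = c ^ 2 * vnormSq (A *ᵥ x) * vnormSq x := by
        rw [mul_comm (c ^ 2), mul_assoc, hc, mul_one]
    _ ≤ opNorm A ^ 2 * vnormSq x := by gcongr

lemma sqrt_vnormSq_mulVec_le_of_unit (hv : vnormSq v = 1) (E : Matrix (Fin M) (Fin N) ℝ) :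
    √(vnormSq (E *ᵥ v)) ≤ √(frobSq E) := by
  simpa [hv] using sqrt_vnormSq_mulVec_le E v

lemma sqrt_vnormSq_vecMul_le_of_unit (hu : vnormSq u = 1) (E : Matrix (Fin M) (Fin N) ℝ) :
    √(vnormSq (u ᵥ* E)) ≤ √(frobSq E) := by
  simpa [mulVec_transpose, frobSq_transpose] using sqrt_vnormSq_mulVec_le_of_unit hu Eᵀ

lemma abs_dotProduct_mulVec_le (hu : vnormSq u = 1) (hv : vnormSq v = 1)
    (E : Matrix (Fin M) (Fin N) ℝ) : |u ⬝ᵥ E *ᵥ v| ≤ √(frobSq E) := by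
  simpa [hu] using (abs_dotProduct_le u (E *ᵥ v)).trans
    (mul_le_mul_of_nonneg_left (sqrt_vnormSq_mulVec_le_of_unit hv E) (Real.sqrt_nonneg _))

end Norms

section Projection

variable {M N : ℕ} {v : Fin N → ℝ}

lemma proj_mulVec (v x : Fin N → ℝ) : (1 - vecMulVec v v) *ᵥ x = x - (v ⬝ᵥ x) • v := by
  simp [sub_mulVec, vecMulVec_mulVec]

lemma proj_transpose (v : Fin N → ℝ) : (1 - vecMulVec v v)ᵀ = 1 - vecMulVec v v := by
  rw [transpose_sub, transpose_one, transpose_vecMulVec]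

lemma dotProduct_proj_mulVec (hv : vnormSq v = 1) (x : Fin N → ℝ) :
    v ⬝ᵥ (1 - vecMulVec v v) *ᵥ x = 0 := by
  rw [proj_mulVec, dotProduct_sub, dotProduct_smul, ← vnormSq_eq_dotProduct, hv, smul_eq_mul,
    mul_one, sub_self]

lemma vnormSq_proj_mulVec (hv : vnormSq v = 1) (x : Fin N → ℝ) :
    vnormSq ((1 - vecMulVec v v) *ᵥ x) = vnormSq x - (v ⬝ᵥ x) ^ 2 := by
  rw [proj_mulVec, sub_eq_add_neg, vnormSq_add, ← neg_smul, vnormSq_smul, dotProduct_smul,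
    dotProduct_comm x v, hv, smul_eq_mul]
  ring

lemma proj_mulVec_dotProduct_proj_mulVec (hv : vnormSq v = 1) (x y : Fin N → ℝ) :
    (1 - vecMulVec v v) *ᵥ x ⬝ᵥ (1 - vecMulVec v v) *ᵥ y = x ⬝ᵥ (1 - vecMulVec v v) *ᵥ y := by
  rw [proj_mulVec v x, sub_dotProduct, smul_dotProduct, dotProduct_proj_mulVec hv, smul_zero,
    sub_zero]

lemma vnormSq_add_smul_proj_mulVec (hv : vnormSq v = 1) (c : ℝ) (w : Fin N → ℝ) :
    vnormSq (v + c • (1 - vecMulVec v v) *ᵥ w)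
      = 1 + c ^ 2 * vnormSq ((1 - vecMulVec v v) *ᵥ w) := by
  rw [vnormSq_add, hv, dotProduct_smul, dotProduct_proj_mulVec hv, vnormSq_smul, smul_zero]
  ring

lemma sqrt_vnormSq_proj_mulVec_le (hv : vnormSq v = 1) (x : Fin N → ℝ) :
    √(vnormSq ((1 - vecMulVec v v) *ᵥ x)) ≤ √(vnormSq x) := by
  rw [vnormSq_proj_mulVec hv]
  exact Real.sqrt_le_sqrt (sub_le_self _ (sq_nonneg _))

lemma frobSq_mul_proj (hv : vnormSq v = 1) (E : Matrix (Fin M) (Fin N) ℝ) :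
    frobSq (E * (1 - vecMulVec v v)) = frobSq E - vnormSq (E *ᵥ v) := by
  have hrow (i : Fin M) : (E * (1 - vecMulVec v v) : Matrix (Fin M) (Fin N) ℝ) i
      = (1 - vecMulVec v v) *ᵥ E i := by
    rw [← vecMul_transpose, proj_transpose]; rfl
  simp only [frobSq_eq_sum_vnormSq, hrow, vnormSq_proj_mulVec hv, Finset.sum_sub_distrib]
  simp only [vnormSq, mulVec, dotProduct_comm v]

lemma frobSq_proj_mul {u : Fin M → ℝ} (hu : vnormSq u = 1) (E : Matrix (Fin M) (Fin N) ℝ) :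
    frobSq ((1 - vecMulVec u u) * E) = frobSq E - vnormSq (u ᵥ* E) := by
  rw [← frobSq_transpose, transpose_mul, proj_transpose, frobSq_mul_proj hu, frobSq_transpose,
    mulVec_transpose]

lemma frobSq_proj_mul_proj {u : Fin M → ℝ} (hu : vnormSq u = 1) (hv : vnormSq v = 1)
    (E : Matrix (Fin M) (Fin N) ℝ) :
    frobSq ((1 - vecMulVec u u) * E * (1 - vecMulVec v v))
      = frobSq E - vnormSq (E *ᵥ v) - vnormSq ((1 - vecMulVec v v) *ᵥ (u ᵥ* E)) := by
  rw [frobSq_mul_proj hv, frobSq_proj_mul hu, ← mulVec_mulVec, vnormSq_proj_mulVec hu,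
    vnormSq_proj_mulVec hv, dotProduct_comm v, ← dotProduct_mulVec, dotProduct_comm u]
  ring

end Projection

lemma concave_quadratic_le_add_cube {σ ε e H p : ℝ} (hσ : 0 < σ) (hε : 0 ≤ ε)
    (hεσ : ε ≤ σ / 4) (he : -ε ≤ e) (hH : 0 ≤ H) (hp : 0 ≤ p) (hpε : p ≤ ε) (t : ℝ) :
    (σ ^ 2 + 2 * σ * e + H) * (1 - t ^ 2) + 2 * (σ * p + ε ^ 2) * t + ε ^ 2 * t ^ 2
      ≤ σ ^ 2 + 2 * σ * e + H + p ^ 2 + 11 * ε ^ 3 / σ := by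
  set a := σ ^ 2 + 2 * σ * e + H - ε ^ 2
  set b := σ * p + ε ^ 2
  have ha : σ ^ 2 - 2 * σ * ε - ε ^ 2 ≤ a := by nlinarith
  have ha' : 7 * σ ^ 2 / 16 ≤ a := by nlinarith
  have ha0 : 0 < a := by nlinarith
  -- `b² - (σ² - 2σε - ε²) p² ≤ 4σε³ + 2ε⁴ ≤ (9/2) σε³`, and `11 a ε³ / σ ≥ (77/16) σε³`.
  have hb : b ^ 2 ≤ a * (p ^ 2 + 11 * ε ^ 3 / σ) := by
    have h1 : σ * p * ε ^ 2 ≤ σ * ε ^ 3 := by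
      have := mul_le_mul_of_nonneg_left hpε (by positivity : (0 : ℝ) ≤ σ * ε ^ 2); nlinarith
    have h2 : (2 * σ * ε + ε ^ 2) * p ^ 2 ≤ (2 * σ * ε + ε ^ 2) * ε ^ 2 := by gcongr
    have h3 : ε ^ 4 ≤ σ * ε ^ 3 / 4 := by
      have := mul_le_mul_of_nonneg_left hεσ (by positivity : (0 : ℝ) ≤ ε ^ 3); nlinarith
    have h4 : 77 * σ * ε ^ 3 / 16 ≤ a * (11 * ε ^ 3 / σ) := by
      rw [← mul_div_assoc, le_div_iff₀ hσ]
      have := mul_le_mul_of_nonneg_right ha' (by positivity : (0 : ℝ) ≤ 11 * ε ^ 3); nlinarith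
    have h5 : (σ ^ 2 - 2 * σ * ε - ε ^ 2) * p ^ 2 ≤ a * p ^ 2 := by gcongr
    nlinarith
  have hquad : -a * t ^ 2 + 2 * b * t ≤ b ^ 2 / a := by
    rw [le_div_iff₀ ha0]
    nlinarith [sq_nonneg (a * t - b)]
  have hba : b ^ 2 / a ≤ p ^ 2 + 11 * ε ^ 3 / σ := by
    rwa [div_le_iff₀' ha0]
  linear_combination hquad + hba

lemma mul_one_add_sq_div_le {σ ε e H p : ℝ} (hσ : 0 < σ) (hε : 0 ≤ ε) (hεσ : ε ≤ σ / 4)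
    (he : e ≤ ε) (hH : H ≤ ε ^ 2) (hp : 0 ≤ p) (hpε : p ≤ ε) :
    (σ ^ 2 + 2 * σ * e + H + p ^ 2 - 11 * ε ^ 3 / σ) * (1 + (p / σ) ^ 2)
      ≤ σ ^ 2 + 2 * σ * e + H + 2 * p ^ 2 - 2 * ε ^ 3 / σ := by
  have hp2 : p ^ 2 ≤ ε ^ 2 := by gcongr
  have h1 : e * p ^ 2 / σ ≤ ε ^ 3 / σ := by
    gcongr; nlinarith
  have h2 : (H + p ^ 2) * p ^ 2 / σ ^ 2 ≤ ε ^ 3 / σ / 2 := by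
    rw [div_le_iff₀ (by positivity), show ε ^ 3 / σ / 2 * σ ^ 2 = σ * ε ^ 3 / 2 by field_simp]
    have := mul_le_mul_of_nonneg_left hεσ (by positivity : 0 ≤ ε ^ 3)
    nlinarith
  have h3 : 0 ≤ ε ^ 3 / σ * (p / σ) ^ 2 := by positivity
  have h4 : 0 ≤ ε ^ 3 / σ := by positivity
  have expand : (σ ^ 2 + 2 * σ * e + H + p ^ 2 - 11 * ε ^ 3 / σ) * (1 + (p / σ) ^ 2)
      = σ ^ 2 + 2 * σ * e + H + 2 * p ^ 2 - 11 * (ε ^ 3 / σ) + 2 * (e * p ^ 2 / σ)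
        + (H + p ^ 2) * p ^ 2 / σ ^ 2 - 11 * (ε ^ 3 / σ * (p / σ) ^ 2) := by
    field_simp; ring
  rw [expand, show 2 * ε ^ 3 / σ = 2 * (ε ^ 3 / σ) by ring]
  linarith

section RankOnePerturbation

variable {M N : ℕ} {u : Fin M → ℝ} {v : Fin N → ℝ}

lemma smul_vecMulVec_add_mulVec (σ : ℝ) (E : Matrix (Fin M) (Fin N) ℝ) (x : Fin N → ℝ) :
    (σ • vecMulVec u v + E) *ᵥ x = (σ * (v ⬝ᵥ x)) • u + E *ᵥ x := by
  simp [add_mulVec, smul_mulVec, vecMulVec_mulVec, smul_smul]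

lemma vnormSq_smul_vecMulVec_add_mulVec (hu : vnormSq u = 1) (σ : ℝ)
    (E : Matrix (Fin M) (Fin N) ℝ) (x : Fin N → ℝ) :
    vnormSq ((σ • vecMulVec u v + E) *ᵥ x)
      = (σ * (v ⬝ᵥ x)) ^ 2 + 2 * (σ * (v ⬝ᵥ x)) * (u ᵥ* E ⬝ᵥ x) + vnormSq (E *ᵥ x) := by
  rw [smul_vecMulVec_add_mulVec, vnormSq_add, vnormSq_smul, hu, smul_dotProduct,
    dotProduct_mulVec, smul_eq_mul]
  ring

lemma frobSq_smul_vecMulVec_add (hu : vnormSq u = 1) (hv : vnormSq v = 1) (σ : ℝ)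
    (E : Matrix (Fin M) (Fin N) ℝ) :
    frobSq (σ • vecMulVec u v + E) = σ ^ 2 + 2 * σ * (u ⬝ᵥ E *ᵥ v) + frobSq E := by
  have hrow (i : Fin M) : (σ • vecMulVec u v + E) i = (σ * u i) • v + E i := by
    ext j; simp [vecMulVec_apply, mul_assoc]
  have hcross : ∑ i, σ * u i * (v ⬝ᵥ E i) = σ * (u ⬝ᵥ E *ᵥ v) := by
    simp only [dotProduct, mulVec, Finset.mul_sum]
    exact Finset.sum_congr rfl fun i _ => Finset.sum_congr rfl fun j _ => by ring
  have hsq : ∑ i, (σ * u i) ^ 2 = σ ^ 2 := by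
    rw [← mul_one (σ ^ 2), ← hu, vnormSq, Finset.mul_sum]
    simp only [mul_pow]
  simp only [frobSq_eq_sum_vnormSq, hrow, vnormSq_add, vnormSq_smul, hv, mul_one, smul_dotProduct,
    smul_eq_mul, Finset.sum_add_distrib, ← Finset.mul_sum]
  rw [← frobSq_eq_sum_vnormSq, hsq, hcross]
  ring

/-- The second-order Taylor expansion of `‖σuvᵀ + E‖_op²` in `E`. -/
def opNormSqExpansion (σ : ℝ) (u : Fin M → ℝ) (v : Fin N → ℝ)
    (E : Matrix (Fin M) (Fin N) ℝ) : ℝ :=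
  σ ^ 2 + 2 * σ * (u ⬝ᵥ E *ᵥ v) + vnormSq (E *ᵥ v) + vnormSq ((1 - vecMulVec v v) *ᵥ (u ᵥ* E))

lemma frobSq_sub_opNormSqExpansion (hu : vnormSq u = 1) (hv : vnormSq v = 1) (σ : ℝ)
    (E : Matrix (Fin M) (Fin N) ℝ) :
    frobSq (σ • vecMulVec u v + E) - opNormSqExpansion σ u v E
      = frobSq ((1 - vecMulVec u u) * E * (1 - vecMulVec v v)) := by
  rw [frobSq_smul_vecMulVec_add hu hv, frobSq_proj_mul_proj hu hv, opNormSqExpansion]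
  ring

lemma exists_vnormSq_smul_vecMulVec_add_mulVec_le (hu : vnormSq u = 1) (hv : vnormSq v = 1)
    {σ : ℝ} (hσ : 0 ≤ σ) (E : Matrix (Fin M) (Fin N) ℝ) {x : Fin N → ℝ} (hx : vnormSq x = 1) :
    ∃ t, vnormSq ((σ • vecMulVec u v + E) *ᵥ x)
      ≤ (σ ^ 2 + 2 * σ * (u ⬝ᵥ E *ᵥ v) + vnormSq (E *ᵥ v)) * (1 - t ^ 2)
        + 2 * (σ * √(vnormSq ((1 - vecMulVec v v) *ᵥ (u ᵥ* E))) + √(frobSq E) ^ 2) * t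
        + √(frobSq E) ^ 2 * t ^ 2 := by
  set ε := √(frobSq E)
  set α := v ⬝ᵥ x
  set y := (1 - vecMulVec v v) *ᵥ x
  set g' := (1 - vecMulVec v v) *ᵥ (u ᵥ* E)
  set t := √(vnormSq y)
  refine ⟨t, ?_⟩
  have hsplit : x = α • v + y := by
    rw [show y = x - α • v from proj_mulVec v x]; abel
  have ht : t ^ 2 = 1 - α ^ 2 := by
    rw [Real.sq_sqrt (vnormSq_nonneg _), vnormSq_proj_mulVec hv, hx]
  have hα : |α| ≤ 1 := abs_le_one_iff_mul_self_le_one.mpr (by nlinarith)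
  have hgx : u ᵥ* E ⬝ᵥ x = α * (u ⬝ᵥ E *ᵥ v) + g' ⬝ᵥ y := by
    have hg'y : g' ⬝ᵥ y = u ᵥ* E ⬝ᵥ y := proj_mulVec_dotProduct_proj_mulVec hv _ _
    rw [hg'y]
    nth_rewrite 1 [hsplit]
    rw [dotProduct_add, dotProduct_smul, ← dotProduct_mulVec, smul_eq_mul]
  have hEx : vnormSq (E *ᵥ x) = α ^ 2 * vnormSq (E *ᵥ v) + 2 * α * (E *ᵥ v ⬝ᵥ E *ᵥ y)
      + vnormSq (E *ᵥ y) := by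
    rw [hsplit, mulVec_add, mulVec_smul, vnormSq_add, vnormSq_smul, smul_dotProduct, smul_eq_mul]
    ring
  have hP : |g' ⬝ᵥ y| ≤ √(vnormSq g') * t := abs_dotProduct_le g' y
  have hR : |E *ᵥ v ⬝ᵥ E *ᵥ y| ≤ ε * (ε * t) :=
    (abs_dotProduct_le _ _).trans (mul_le_mul (sqrt_vnormSq_mulVec_le_of_unit hv E)
      (sqrt_vnormSq_mulVec_le E y) (Real.sqrt_nonneg _) (Real.sqrt_nonneg _))
  have hW : vnormSq (E *ᵥ y) ≤ ε ^ 2 * t ^ 2 := by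
    rw [Real.sq_sqrt (frobSq_nonneg E), Real.sq_sqrt (vnormSq_nonneg y)]
    exact vnormSq_mulVec_le E y
  have hαP : α * (g' ⬝ᵥ y) ≤ √(vnormSq g') * t :=
    (le_abs_self _).trans (abs_mul α _ ▸ (mul_le_of_le_one_left (abs_nonneg _) hα).trans hP)
  have hαR : α * (E *ᵥ v ⬝ᵥ E *ᵥ y) ≤ ε * (ε * t) :=
    (le_abs_self _).trans (abs_mul α _ ▸ (mul_le_of_le_one_left (abs_nonneg _) hα).trans hR)
  have hAx : vnormSq ((σ • vecMulVec u v + E) *ᵥ x)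
      = (σ * α) ^ 2 + 2 * (σ * α) * (u ᵥ* E ⬝ᵥ x) + vnormSq (E *ᵥ x) :=
    vnormSq_smul_vecMulVec_add_mulVec hu σ E x
  rw [hAx, hgx, hEx]
  linear_combination 2 * mul_le_mul_of_nonneg_left hαP hσ + 2 * hαR + hW
    + (σ ^ 2 + 2 * σ * (u ⬝ᵥ E *ᵥ v) + vnormSq (E *ᵥ v)) * ht

lemma sq_opNorm_smul_vecMulVec_add_le (hu : vnormSq u = 1) (hv : vnormSq v = 1) {σ : ℝ}
    (hσ : 0 < σ) (E : Matrix (Fin M) (Fin N) ℝ) (hE : √(frobSq E) ≤ σ / 4) :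
    opNorm (σ • vecMulVec u v + E) ^ 2 ≤ opNormSqExpansion σ u v E + 11 * √(frobSq E) ^ 3 / σ := by
  have hp : √(vnormSq ((1 - vecMulVec v v) *ᵥ (u ᵥ* E))) ≤ √(frobSq E) :=
    (sqrt_vnormSq_proj_mulVec_le hv _).trans (sqrt_vnormSq_vecMul_le_of_unit hu E)
  have hbound (x : Fin N → ℝ) (hx : vnormSq x = 1) : vnormSq ((σ • vecMulVec u v + E) *ᵥ x)
      ≤ opNormSqExpansion σ u v E + 11 * √(frobSq E) ^ 3 / σ := by
    obtain ⟨t, ht⟩ := exists_vnormSq_smul_vecMulVec_add_mulVec_le hu hv hσ.le E hx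
    rw [opNormSqExpansion, ← Real.sq_sqrt (vnormSq_nonneg ((1 - vecMulVec v v) *ᵥ (u ᵥ* E)))]
    exact ht.trans (concave_quadratic_le_add_cube hσ (Real.sqrt_nonneg _) hE
      (neg_le_of_abs_le (abs_dotProduct_mulVec_le hu hv E)) (vnormSq_nonneg _)
      (Real.sqrt_nonneg _) hp t)
  exact sq_opNorm_le _ ((vnormSq_nonneg _).trans (hbound v hv)) hbound

lemma le_vnormSq_smul_vecMulVec_add_mulVec (hu : vnormSq u = 1) (hv : vnormSq v = 1) {σ : ℝ}
    (hσ : 0 < σ) (E : Matrix (Fin M) (Fin N) ℝ) :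
    σ ^ 2 + 2 * σ * (u ⬝ᵥ E *ᵥ v) + vnormSq (E *ᵥ v)
        + 2 * vnormSq ((1 - vecMulVec v v) *ᵥ (u ᵥ* E)) - 2 * √(frobSq E) ^ 3 / σ
      ≤ vnormSq ((σ • vecMulVec u v + E) *ᵥ (v + σ⁻¹ • (1 - vecMulVec v v) *ᵥ (u ᵥ* E))) := by
  set ε := √(frobSq E)
  set g := u ᵥ* E
  set g' := (1 - vecMulVec v v) *ᵥ g
  have hvg' : v ⬝ᵥ g' = 0 := dotProduct_proj_mulVec hv g
  have hvz : v ⬝ᵥ (v + σ⁻¹ • g') = 1 := by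
    rw [dotProduct_add, dotProduct_smul, hvg', ← vnormSq_eq_dotProduct, hv, smul_zero, add_zero]
  have hgz : g ⬝ᵥ (v + σ⁻¹ • g') = u ⬝ᵥ E *ᵥ v + σ⁻¹ * vnormSq g' := by
    have hgg' : g ⬝ᵥ g' = vnormSq g' :=
      ((vnormSq_eq_dotProduct g').trans (proj_mulVec_dotProduct_proj_mulVec hv g g)).symm
    rw [dotProduct_add, dotProduct_smul, hgg', ← dotProduct_mulVec, smul_eq_mul]
  have hEz : vnormSq (E *ᵥ (v + σ⁻¹ • g')) = vnormSq (E *ᵥ v)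
      + 2 * σ⁻¹ * (E *ᵥ v ⬝ᵥ E *ᵥ g') + σ⁻¹ ^ 2 * vnormSq (E *ᵥ g') := by
    rw [mulVec_add, mulVec_smul, vnormSq_add, vnormSq_smul, dotProduct_smul, smul_eq_mul]
    ring
  have hhm : -ε ^ 3 ≤ E *ᵥ v ⬝ᵥ E *ᵥ g' := by
    refine neg_le_of_abs_le ((abs_dotProduct_le _ _).trans ?_)
    calc √(vnormSq (E *ᵥ v)) * √(vnormSq (E *ᵥ g')) ≤ ε * (ε * √(vnormSq g')) :=
          mul_le_mul (sqrt_vnormSq_mulVec_le_of_unit hv E) (sqrt_vnormSq_mulVec_le E g')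
            (Real.sqrt_nonneg _) (Real.sqrt_nonneg _)
      _ ≤ ε * (ε * ε) := by
          gcongr
          exact (sqrt_vnormSq_proj_mulVec_le hv g).trans (sqrt_vnormSq_vecMul_le_of_unit hu E)
      _ = ε ^ 3 := by ring
  rw [vnormSq_smul_vecMulVec_add_mulVec hu, hvz, hgz, hEz]
  have h1 : σ * σ⁻¹ = 1 := mul_inv_cancel₀ hσ.ne'
  have h2 : -(ε ^ 3 / σ) ≤ σ⁻¹ * (E *ᵥ v ⬝ᵥ E *ᵥ g') := by
    rw [← neg_div, div_eq_inv_mul]; exact mul_le_mul_of_nonneg_left hhm (by positivity)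
  have h3 : 0 ≤ σ⁻¹ ^ 2 * vnormSq (E *ᵥ g') := mul_nonneg (by positivity) (vnormSq_nonneg _)
  linear_combination (-2 * vnormSq g') * h1 + 2 * h2 + h3

lemma opNormSqExpansion_sub_le_sq_opNorm (hu : vnormSq u = 1) (hv : vnormSq v = 1) {σ : ℝ}
    (hσ : 0 < σ) (E : Matrix (Fin M) (Fin N) ℝ) (hE : √(frobSq E) ≤ σ / 4) :
    opNormSqExpansion σ u v E - 11 * √(frobSq E) ^ 3 / σ ≤ opNorm (σ • vecMulVec u v + E) ^ 2 := by
  set g' := (1 - vecMulVec v v) *ᵥ (u ᵥ* E)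
  set z := v + σ⁻¹ • g'
  have hp2 : √(vnormSq g') ^ 2 = vnormSq g' := Real.sq_sqrt (vnormSq_nonneg _)
  have hz : vnormSq z = 1 + (√(vnormSq g') / σ) ^ 2 := by
    rw [vnormSq_add_smul_proj_mulVec hv, div_pow, hp2, inv_pow, inv_mul_eq_div]
  have hH : vnormSq (E *ᵥ v) ≤ √(frobSq E) ^ 2 := by
    rw [Real.sq_sqrt (frobSq_nonneg E)]; simpa [hv] using vnormSq_mulVec_le E v
  have hlow := mul_one_add_sq_div_le hσ (Real.sqrt_nonneg _) hE
    (le_of_abs_le (abs_dotProduct_mulVec_le hu hv E)) hH (Real.sqrt_nonneg _)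
    ((sqrt_vnormSq_proj_mulVec_le hv _).trans (sqrt_vnormSq_vecMul_le_of_unit hu E))
  rw [← hz, hp2] at hlow
  rw [opNormSqExpansion]
  refine le_of_mul_le_mul_right ?_ (hz ▸ by positivity : 0 < vnormSq z)
  exact hlow.trans ((le_vnormSq_smul_vecMulVec_add_mulVec hu hv hσ E).trans
    (vnormSq_mulVec_le_sq_opNorm_mul _ z))

end RankOnePerturbation

/-- for `C = σuvᵀ` (with `σ > 0` and `u, v` unit) the squared
Frobenius distance of `C + E` from its best rank-one approximation, which by
Eckart–Young–Mirsky equals `‖C+E‖_F² − ‖C+E‖_op²`, satisfies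
`| (‖C+E‖_F² − ‖C+E‖_op²) − ‖(I−uuᵀ)E(I−vvᵀ)‖_F² | ≤ Λ‖E‖_F³`
for `‖E‖_F ≤ δ`, for some `δ > 0` and `Λ ≥ 0`. -/
theorem statement10 (M N : ℕ) (u : Fin M → ℝ) (v : Fin N → ℝ)
    (hu : vnormSq u = 1) (hv : vnormSq v = 1) (σ : ℝ) (hσ : 0 < σ)
    (C : Matrix (Fin M) (Fin N) ℝ) (hC : C = σ • vecMulVec u v) :
    ∃ δ : ℝ, 0 < δ ∧ ∃ Λ : ℝ, 0 ≤ Λ ∧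
      ∀ E : Matrix (Fin M) (Fin N) ℝ, Real.sqrt (frobSq E) ≤ δ →
        |(frobSq (C + E) - opNorm (C + E) ^ 2)
            - frobSq ((1 - vecMulVec u u) * E * (1 - vecMulVec v v))|
          ≤ Λ * Real.sqrt (frobSq E) ^ 3 := by
  subst hC
  refine ⟨σ / 4, by positivity, 11 / σ, by positivity, fun E hE => ?_⟩
  have hupper := sq_opNorm_smul_vecMulVec_add_le hu hv hσ E hE
  have hlower := opNormSqExpansion_sub_le_sq_opNorm hu hv hσ E hE
  rw [← frobSq_sub_opNormSqExpansion hu hv σ E, sub_sub_sub_cancel_left, abs_sub_comm, abs_le,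
    div_mul_eq_mul_div]
  constructor <;> linarith

end
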